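/- For any u ∈ A_{2n}(4312), u_1 ≤ g(u), where g(u) = min{2n+1, u_i : ∃ i < j < k with u_j < u_k < u_i}. -/

import Mathlib

/-- `u` is a permutation of `{1,...,m}`, given as the word `u 0, u 1, ..., u (m-1)`. -/
def IsPermOn (m : ℕ) (u : Fin m → ℕ) : Prop :=
  Function.Injective u ∧ ∀ i, u i ∈ Finset.Icc 1 m

/-- up-down (alternating): u 0 < u 1 > u 2 < u 3 > ... -/
def UpDown (m : ℕ) (u : Fin m → ℕ) : Prop :=
  ∀ i : ℕ, ∀ h : i + 1 < m,
    (i % 2 = 0 → u ⟨i, by omega⟩ < u ⟨i + 1, h⟩) ∧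
    (i % 2 = 1 → u ⟨i + 1, h⟩ < u ⟨i, by omega⟩)

/-- down-up: u 0 > u 1 < u 2 > u 3 < ... -/
def DownUp (m : ℕ) (u : Fin m → ℕ) : Prop :=
  ∀ i : ℕ, ∀ h : i + 1 < m,
    (i % 2 = 0 → u ⟨i + 1, h⟩ < u ⟨i, by omega⟩) ∧
    (i % 2 = 1 → u ⟨i, by omega⟩ < u ⟨i + 1, h⟩)

/-- `u` contains the pattern `σ`. -/
def Contains {m k : ℕ} (u : Fin m → ℕ) (σ : Fin k → ℕ) : Prop :=
  ∃ g : Fin k → Fin m, StrictMono g ∧ ∀ a b : Fin k, u (g a) < u (g b) ↔ σ a < σ b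

def Avoids {m k : ℕ} (u : Fin m → ℕ) (σ : Fin k → ℕ) : Prop := ¬ Contains u σ

/-- The set `A_m(σ)` of σ-avoiding up-down alternating permutations of `{1,...,m}`. -/
def AvoidSet (m : ℕ) {k : ℕ} (σ : Fin k → ℕ) : Set (Fin m → ℕ) :=
  {u | IsPermOn m u ∧ UpDown m u ∧ Avoids u σ}

def p1234 : Fin 4 → ℕ := ![1, 2, 3, 4]
def p1243 : Fin 4 → ℕ := ![1, 2, 4, 3]
def p2143 : Fin 4 → ℕ := ![2, 1, 4, 3]
def p4312 : Fin 4 → ℕ := ![4, 3, 1, 2]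
def p3412 : Fin 4 → ℕ := ![3, 4, 1, 2]

/-- `f(u)`: max over 0 and the smaller entries of 21-patterns of `u`. -/
noncomputable def fval {m : ℕ} (u : Fin m → ℕ) : ℕ :=
  sSup ({0} ∪ {x | ∃ i j : Fin m, i < j ∧ u j < u i ∧ x = u j})

/-- `e(u)`: max over 0 and the smallest entries of 132-patterns of `u`. -/
noncomputable def eval' {m : ℕ} (u : Fin m → ℕ) : ℕ :=
  sSup ({0} ∪ {x | ∃ i j k : Fin m, i < j ∧ j < k ∧ u i < u k ∧ u k < u j ∧ x = u i})

/-- `g(u)`: min over m+1 and the largest entries of 312-patterns of `u`. -/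
noncomputable def gval {m : ℕ} (u : Fin m → ℕ) : ℕ :=
  sInf ({m + 1} ∪ {x | ∃ i j k : Fin m, i < j ∧ j < k ∧ u j < u k ∧ u k < u i ∧ x = u i})

/-- `h(u)`: min over m+1 and the larger entries of 12-patterns of `u`. -/
noncomputable def hval {m : ℕ} (u : Fin m → ℕ) : ℕ :=
  sInf ({m + 1} ∪ {x | ∃ i j : Fin m, i < j ∧ u i < u j ∧ x = u j})

/-- the operation `v ↦ u`: prepend `v`, increasing every entry `≥ v` by 1. -/
def ins {m : ℕ} (v : ℕ) (u : Fin m → ℕ) : Fin (m + 1) → ℕ :=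
  Fin.cases v (fun j => if u j < v then u j else u j + 1)

/-- standardization of a word with distinct entries. -/
def stWord {k : ℕ} (r : Fin k → ℕ) : Fin k → ℕ :=
  fun j => (Finset.univ.filter (fun i => r i ≤ r j)).card

lemma contains_p4312_of_lt {m : ℕ} {u : Fin m → ℕ} {a b c d : Fin m}
    (hab : a < b) (hbc : b < c) (hcd : c < d)
    (hcd' : u c < u d) (hdb : u d < u b) (hba : u b < u a) : Contains u p4312 := by
  refine ⟨![a, b, c, d], Fin.strictMono_iff_lt_succ.mpr ?_, ?_⟩
  · intro x
    fin_cases x <;> simpa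
  · intro x y
    fin_cases x <;> fin_cases y <;> simp [p4312] <;> omega

-- Otherwise the first entry followed by the `312` pattern would form a `4312` pattern.
lemma le_of_avoids_p4312_of_312 {m : ℕ} (hm : 0 < m) {u : Fin m → ℕ} (hu : Avoids u p4312)
    {i j k : Fin m} (hij : i < j) (hjk : j < k) (hjk' : u j < u k) (hki : u k < u i) :
    u ⟨0, hm⟩ ≤ u i := by
  by_contra! hlt
  have hi : (⟨0, hm⟩ : Fin m) < i :=
    Nat.pos_of_ne_zero fun h => hlt.ne (congrArg u (Fin.ext h))
  exact hu (contains_p4312_of_lt hi hij hjk hjk' hki hlt)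

lemma le_gval_of_avoids_p4312 {m : ℕ} (hm : 0 < m) {u : Fin m → ℕ} (hu : Avoids u p4312)
    (h0 : u ⟨0, hm⟩ ≤ m + 1) : u ⟨0, hm⟩ ≤ gval u := by
  apply le_csInf ⟨m + 1, Or.inl rfl⟩
  rintro _ (rfl | ⟨i, j, k, hij, hjk, hjk', hki, rfl⟩)
  · exact h0
  · exact le_of_avoids_p4312_of_312 hm hu hij hjk hjk' hki

theorem stmt15 (n : ℕ) (hn : 1 ≤ n) (u : Fin (2 * n) → ℕ) (hu : u ∈ AvoidSet (2 * n) p4312) :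
    u ⟨0, by omega⟩ ≤ gval u := by
  obtain ⟨⟨-, hmem⟩, -, hav⟩ := hu
  refine le_gval_of_avoids_p4312 _ hav ?_
  have := Finset.mem_Icc.mp (hmem ⟨0, by omega⟩)
  omega
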